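/- arXiv:1105.3230 — 3 statements merged into one kernel-verified Lean document; each statement's English description precedes it below -/
import Mathlib

section
/- Let S be symmetric and A skew-symmetric operators on a complex Hilbert space, time-independent, ψ a bounded symmetric operator, and f: ℝ → H twice differentiable with values in the relevant domains. Then d/dt Re(⟨Af, ∂_t f⟩ + ⟨ψ f, ∂_t f⟩) = (1/2)⟨[S,A]f,f⟩ + ⟨ψ ∂_t f, ∂_t f⟩ + ‖Af‖² + Re⟨ψ f,(S+A)f⟩ + Re⟨Af + ψ f, (∂²_t - (S+A))f⟩. -/
open scoped InnerProductSpace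

/-!
Differentiating the multiplier by the product rule gives
`Re⟨Af', f'⟩ + Re⟨Af, f''⟩ + Re⟨ψf', f'⟩ + Re⟨ψf, f''⟩`. The first term vanishes because `A` is
skew, and after expanding the right-hand side what remains is
`(1/2) Re⟨[S,A]f, f⟩ = Re⟨Af, Sf⟩`, which uses that `S` is symmetric and `A` skew.
-/

section InnerProduct

variable {𝕜 E : Type*} [RCLike 𝕜] [NormedAddCommGroup E] [InnerProductSpace 𝕜 E]

open RCLike

lemma re_inner_apply_self_eq_zero_of_skew {A : E → E} (hA : ∀ x y, ⟪A x, y⟫_𝕜 = -⟪x, A y⟫_𝕜)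
    (x : E) : re ⟪A x, x⟫_𝕜 = 0 := by
  have h := congrArg re (hA x x)
  rw [map_neg, inner_re_symm x] at h
  linarith

lemma re_inner_commutator_apply_self {S A : E → E} (hS : ∀ x y, ⟪S x, y⟫_𝕜 = ⟪x, S y⟫_𝕜)
    (hA : ∀ x y, ⟪A x, y⟫_𝕜 = -⟪x, A y⟫_𝕜) (x : E) :
    re ⟪S (A x) - A (S x), x⟫_𝕜 = 2 * re ⟪A x, S x⟫_𝕜 := by
  rw [inner_sub_left, map_sub, hS, hA, map_neg, inner_re_symm x]
  ring

variable [NormedSpace ℝ E] [IsScalarTower ℝ 𝕜 E]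

lemma HasDerivAt.re_inner_clm_apply (T : E →L[𝕜] E) {f g : ℝ → E} {f' g' : E} {t : ℝ}
    (hf : HasDerivAt f f' t) (hg : HasDerivAt g g' t) :
    HasDerivAt (fun s => re ⟪T (f s), g s⟫_𝕜) (re ⟪T (f t), g'⟫_𝕜 + re ⟪T f', g t⟫_𝕜) t := by
  have hTf : HasDerivAt (fun s => T (f s)) (T f') t :=
    (T.restrictScalars ℝ).hasFDerivAt.comp_hasDerivAt t hf
  exact (reCLM.hasFDerivAt.comp_hasDerivAt t (hTf.inner 𝕜 hg)).congr_deriv (map_add re _ _)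

end InnerProduct

theorem stmt4_general {H : Type*} [NormedAddCommGroup H] [InnerProductSpace ℂ H]
    (S A ψ : H →L[ℂ] H)
    (hS : ∀ x y : H, ⟪S x, y⟫_ℂ = ⟪x, S y⟫_ℂ)
    (hA : ∀ x y : H, ⟪A x, y⟫_ℂ = -⟪x, A y⟫_ℂ)
    (f f' f'' : ℝ → H)
    (hf : ∀ t, HasDerivAt f (f' t) t)
    (hf' : ∀ t, HasDerivAt f' (f'' t) t) (t : ℝ) :
    HasDerivAt (fun s => (⟪A (f s), f' s⟫_ℂ + ⟪ψ (f s), f' s⟫_ℂ).re)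
      ((1/2) * (⟪S (A (f t)) - A (S (f t)), f t⟫_ℂ).re
        + (⟪ψ (f' t), f' t⟫_ℂ).re
        + ‖A (f t)‖ ^ 2
        + (⟪ψ (f t), S (f t) + A (f t)⟫_ℂ).re
        + (⟪A (f t) + ψ (f t), f'' t - (S (f t) + A (f t))⟫_ℂ).re) t := by
  have hderiv := ((hf t).re_inner_clm_apply A (hf' t)).add ((hf t).re_inner_clm_apply ψ (hf' t))
  refine hderiv.congr_deriv ?_
  have hskew := re_inner_apply_self_eq_zero_of_skew (𝕜 := ℂ) hA (f' t)
  have hcomm := re_inner_commutator_apply_self (𝕜 := ℂ) hS hA (f t)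
  have hnorm := norm_sq_eq_re_inner (𝕜 := ℂ) (A (f t))
  simp only [RCLike.re_to_complex] at hskew hcomm hnorm ⊢
  simp only [inner_sub_right, inner_add_left, inner_add_right, Complex.add_re, Complex.sub_re]
  linarith

/-- Derivative identity for the Carleman multiplier: with `S` symmetric, `A` skew-symmetric,
`ψ` bounded symmetric (all time-independent), and `f` twice differentiable,
`d/dt Re(⟨Af, f'⟩ + ⟨ψf, f'⟩) = (1/2)⟨[S,A]f,f⟩ + ⟨ψf',f'⟩ + ‖Af‖²
 + Re⟨ψf,(S+A)f⟩ + Re⟨Af + ψf, (f'' - (S+A)f)⟩`. -/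
theorem stmt4 {H : Type*} [NormedAddCommGroup H] [InnerProductSpace ℂ H]
    (S A ψ : H →L[ℂ] H)
    (hS : ∀ x y : H, ⟪S x, y⟫_ℂ = ⟪x, S y⟫_ℂ)
    (hA : ∀ x y : H, ⟪A x, y⟫_ℂ = -⟪x, A y⟫_ℂ)
    (hψ : ∀ x y : H, ⟪ψ x, y⟫_ℂ = ⟪x, ψ y⟫_ℂ)
    (f f' f'' : ℝ → H)
    (hf : ∀ t, HasDerivAt f (f' t) t)
    (hf' : ∀ t, HasDerivAt f' (f'' t) t) (t : ℝ) :
    HasDerivAt (fun s => (⟪A (f s), f' s⟫_ℂ + ⟪ψ (f s), f' s⟫_ℂ).re)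
      ((1/2) * (⟪S (A (f t)) - A (S (f t)), f t⟫_ℂ).re
        + (⟪ψ (f' t), f' t⟫_ℂ).re
        + ‖A (f t)‖ ^ 2
        + (⟪ψ (f t), S (f t) + A (f t)⟫_ℂ).re
        + (⟪A (f t) + ψ (f t), f'' t - (S (f t) + A (f t))⟫_ℂ).re) t :=
  stmt4_general S A ψ hS hA f f' f'' hf hf' t
end

section
/- Let φ: ℝⁿ → ℝ be C⁴, λ > 0, S = -Δ - λ²|∇φ|², A = λ(2∇φ·∇ + Δφ). Then for smooth compactly supported f, the commutator satisfies [S,A]f = -λ(4∇·(D²φ∇f) - 4λ²(∇φ·D²φ·∇φ)f + (Δ²φ)f), where Δ²φ = Δ(Δφ) and D²φ is the Hessian of φ. -/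
open scoped RealInnerProductSpace

section Aux

variable {n : ℕ}

local notation "E" => EuclideanSpace ℝ (Fin n)

/-- auxiliary: partial derivative in direction `i`. -/
noncomputable def pd {n : ℕ} {F : Type*} [NormedAddCommGroup F] [NormedSpace ℝ F]
    (i : Fin n) (g : EuclideanSpace ℝ (Fin n) → F) : EuclideanSpace ℝ (Fin n) → F :=
  fun x => fderiv ℝ g x (EuclideanSpace.single i 1)

variable {F : Type*} [NormedAddCommGroup F] [NormedSpace ℝ F]

theorem ContDiff.pd' {g : E → F} {m N : WithTop ℕ∞} (hg : ContDiff ℝ N g) (h : m + 1 ≤ N)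
    (i : Fin n) : ContDiff ℝ m (pd i g) := by
  have h1 := hg.fderiv_right h
  exact (ContinuousLinearMap.apply ℝ F (EuclideanSpace.single i 1)).contDiff.comp h1

theorem ContDiff.pdtop {g : E → F} (hg : ContDiff ℝ (⊤ : ℕ∞) g) (i : Fin n) :
    ContDiff ℝ (⊤ : ℕ∞) (pd i g) := hg.pd' (by simp) i

theorem pd_add {a b : E → F} (ha : Differentiable ℝ a) (hb : Differentiable ℝ b) (i : Fin n) :
    pd i (fun y => a y + b y) = fun y => pd i a y + pd i b y := by
  funext x; simp only [pd, fderiv_fun_add (ha x) (hb x)]; rfl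

theorem pd_neg {a : E → F} (i : Fin n) :
    pd i (fun y => -a y) = fun y => -pd i a y := by
  funext x; simp only [pd, fderiv_fun_neg]; rfl

theorem pd_sub {a b : E → F} (ha : Differentiable ℝ a) (hb : Differentiable ℝ b) (i : Fin n) :
    pd i (fun y => a y - b y) = fun y => pd i a y - pd i b y := by
  funext x; simp only [pd, fderiv_fun_sub (ha x) (hb x)]; rfl

theorem pd_sum {ι : Type*} (s : Finset ι) {A : ι → E → F}
    (hA : ∀ j ∈ s, Differentiable ℝ (A j)) (i : Fin n) :
    pd i (fun y => ∑ j ∈ s, A j y) = fun y => ∑ j ∈ s, pd i (A j) y := by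
  funext x
  simp only [pd, fderiv_fun_sum (fun j hj => (hA j hj) x), ContinuousLinearMap.sum_apply]

theorem pd_mul {𝔸 : Type*} [NormedCommRing 𝔸] [NormedAlgebra ℝ 𝔸] {a b : E → 𝔸}
    (ha : Differentiable ℝ a) (hb : Differentiable ℝ b) (i : Fin n) :
    pd i (fun y => a y * b y) = fun y => pd i a y * b y + a y * pd i b y := by
  funext x
  simp only [pd, fderiv_fun_mul (ha x) (hb x), ContinuousLinearMap.add_apply,
    ContinuousLinearMap.smul_apply, smul_eq_mul]
  ring

theorem pd_const_mul {𝔸 : Type*} [NormedCommRing 𝔸] [NormedAlgebra ℝ 𝔸] {b : E → 𝔸}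
    (hb : Differentiable ℝ b) (c : 𝔸) (i : Fin n) :
    pd i (fun y => c * b y) = fun y => c * pd i b y := by
  funext x
  simp only [pd, fderiv_const_mul (hb x) c]
  simp [smul_eq_mul]

theorem pd_ofReal {r : E → ℝ} (hr : Differentiable ℝ r) (i : Fin n) :
    pd i (fun y => ((r y : ℝ) : ℂ)) = fun y => ((pd i r y : ℝ) : ℂ) := by
  funext x
  have h := (Complex.ofRealCLM.hasFDerivAt (x := r x)).comp x (hr x).hasFDerivAt
  have : fderiv ℝ (fun y => ((r y : ℝ) : ℂ)) x
      = Complex.ofRealCLM.comp (fderiv ℝ r x) := by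
    have := h.fderiv
    rw [← (hr x).hasFDerivAt.fderiv] at this ⊢
    exact this
  simp only [pd, this]
  simp

theorem differentiable_ofReal {r : E → ℝ} (hr : Differentiable ℝ r) :
    Differentiable ℝ (fun y => ((r y : ℝ) : ℂ)) :=
  fun x => (Complex.ofRealCLM.differentiableAt).comp x (hr x)

theorem pd_comm {g : E → F} (hg : ContDiff ℝ 2 g) (i j : Fin n) (x : E) :
    pd i (pd j g) x = pd j (pd i g) x := by
  have hd : DifferentiableAt ℝ (fderiv ℝ g) x := by
    have : ContDiff ℝ 1 (fderiv ℝ g) := hg.fderiv_right (by norm_num)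
    exact this.differentiable one_ne_zero x
  have h1 : ∀ v w : E, fderiv ℝ (fun y => fderiv ℝ g y v) x w
      = fderiv ℝ (fderiv ℝ g) x w v := by
    intro v w
    rw [fderiv_clm_apply hd (differentiableAt_const v)]
    simp
  have hsymm := (hg.contDiffAt (x := x)).isSymmSndFDerivAt (by norm_num)
  have e1 : pd i (pd j g) x = fderiv ℝ (fderiv ℝ g) x (EuclideanSpace.single i 1)
      (EuclideanSpace.single j 1) := h1 _ _
  have e2 : pd j (pd i g) x = fderiv ℝ (fderiv ℝ g) x (EuclideanSpace.single j 1)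
      (EuclideanSpace.single i 1) := h1 _ _
  rw [e1, e2]; exact hsymm _ _

theorem clm_decomp (v : E) (L : E →L[ℝ] F) :
    L v = ∑ i, v i • L (EuclideanSpace.single i 1) := by
  have hv : ∑ i, v i • (EuclideanSpace.single i 1 : E) = v := by
    simpa [EuclideanSpace.basisFun_repr, EuclideanSpace.basisFun_apply] using
      (EuclideanSpace.basisFun (Fin n) ℝ).sum_repr v
  conv_lhs => rw [← hv]
  rw [map_sum]
  exact Finset.sum_congr rfl fun i _ => by rw [map_smul]

theorem fderiv_decomp_c (g : E → ℂ) (x v : E) :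
    fderiv ℝ g x v = ∑ i, ((v i : ℝ) : ℂ) * pd i g x := by
  rw [clm_decomp v (fderiv ℝ g x)]
  exact Finset.sum_congr rfl fun i _ => by rw [Complex.real_smul]; rfl

theorem fderiv_decomp_r (g : E → ℝ) (x v : E) :
    fderiv ℝ g x v = ∑ i, v i * pd i g x := by
  rw [clm_decomp v (fderiv ℝ g x)]; rfl

theorem grad_comp (φ : E → ℝ) (x : E) (i : Fin n) : gradient φ x i = pd i φ x := by
  have : ⟪gradient φ x, EuclideanSpace.single i 1⟫
      = fderiv ℝ φ x (EuclideanSpace.single i 1) := InnerProductSpace.toDual_symm_apply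
  rw [show pd i φ x = fderiv ℝ φ x (EuclideanSpace.single i 1) from rfl, ← this,
    EuclideanSpace.inner_single_right]
  simp

theorem norm_grad_sq (φ : E → ℝ) (x : E) :
    ‖gradient φ x‖ ^ 2 = ∑ i, pd i φ x * pd i φ x := by
  rw [← real_inner_self_eq_norm_sq]
  simp only [PiLp.inner_apply, RCLike.inner_apply, conj_trivial, grad_comp]

theorem grad_inner (φ : E → ℝ) (x v u : E) (hd : DifferentiableAt ℝ (fderiv ℝ φ) x) :
    ⟪fderiv ℝ (gradient φ) x v, u⟫ = fderiv ℝ (fun y => fderiv ℝ φ y u) x v := by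
  have hgrad : gradient φ = fun y =>
      (InnerProductSpace.toDual ℝ E).symm (fderiv ℝ φ y) := rfl
  have hT := ((InnerProductSpace.toDual ℝ E).symm.toContinuousLinearEquiv
      : StrongDual ℝ E ≃L[ℝ] E).toContinuousLinearMap
  have hcomp : fderiv ℝ (gradient φ) x =
      (((InnerProductSpace.toDual ℝ E).symm.toContinuousLinearEquiv
        : StrongDual ℝ E ≃L[ℝ] E).toContinuousLinearMap).comp
        (fderiv ℝ (fderiv ℝ φ) x) := by
    rw [hgrad]
    exact (((InnerProductSpace.toDual ℝ E).symm.toContinuousLinearEquiv.toContinuousLinearMap).hasFDerivAt.comp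
      x hd.hasFDerivAt).fderiv
  rw [hcomp]
  have : ⟪(InnerProductSpace.toDual ℝ E).symm (fderiv ℝ (fderiv ℝ φ) x v), u⟫
      = fderiv ℝ (fderiv ℝ φ) x v u := InnerProductSpace.toDual_symm_apply
  rw [show ((((InnerProductSpace.toDual ℝ E).symm.toContinuousLinearEquiv
        : StrongDual ℝ E ≃L[ℝ] E).toContinuousLinearMap).comp
        (fderiv ℝ (fderiv ℝ φ) x)) v
      = (InnerProductSpace.toDual ℝ E).symm (fderiv ℝ (fderiv ℝ φ) x v) from rfl, this]
  rw [fderiv_clm_apply hd (differentiableAt_const u)]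
  simp

end Aux

/-- The Laplacian on Euclidean space, as the sum of second partial derivatives. -/
noncomputable def lap {n : ℕ} {F : Type*} [NormedAddCommGroup F] [NormedSpace ℝ F]
    (f : EuclideanSpace ℝ (Fin n) → F) (x : EuclideanSpace ℝ (Fin n)) : F :=
  ∑ i, fderiv ℝ (fun y => fderiv ℝ f y (EuclideanSpace.single i 1)) x
    (EuclideanSpace.single i 1)

/-- Commutator formula: for `S = -Δ - λ²|∇φ|²` and `A = λ(2∇φ·∇ + Δφ)` with `φ ∈ C⁴`,
and `f` smooth compactly supported,
`[S,A]f = -λ(4∇·(D²φ∇f) - 4λ²(∇φ·D²φ·∇φ)f + (Δ²φ)f)`. -/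
theorem stmt9 (n : ℕ) (φ : EuclideanSpace ℝ (Fin n) → ℝ) (lam : ℝ) (hlam : 0 < lam)
    (hφ : ContDiff ℝ 4 φ)
    (Sop Aop : (EuclideanSpace ℝ (Fin n) → ℂ) → EuclideanSpace ℝ (Fin n) → ℂ)
    (hSop : ∀ g x, Sop g x = -(lap g x) - ((lam ^ 2 * ‖gradient φ x‖ ^ 2 : ℝ) : ℂ) * g x)
    (hAop : ∀ g x, Aop g x = 2 * (lam : ℂ) * fderiv ℝ g x (gradient φ x)
        + (lam : ℂ) * ((lap φ x : ℝ) : ℂ) * g x)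
    (f : EuclideanSpace ℝ (Fin n) → ℂ)
    (hfsm : ContDiff ℝ (⊤ : ℕ∞) f) (hfsupp : HasCompactSupport f) :
    ∀ x : EuclideanSpace ℝ (Fin n),
      Sop (fun y => Aop f y) x - Aop (fun y => Sop f y) x
        = -(lam : ℂ) *
            (4 * (∑ i, fderiv ℝ
                  (fun y => ∑ j,
                    ((fderiv ℝ (fun z => fderiv ℝ φ z (EuclideanSpace.single j 1)) y
                        (EuclideanSpace.single i 1) : ℝ) : ℂ)
                      * fderiv ℝ f y (EuclideanSpace.single j 1)) x
                  (EuclideanSpace.single i 1))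
              - 4 * (lam : ℂ) ^ 2
                  * ((⟪fderiv ℝ (gradient φ) x (gradient φ x), gradient φ x⟫ : ℝ) : ℂ)
                  * f x
              + ((lap (lap φ) x : ℝ) : ℂ) * f x) := by
  intro x
  -- smoothness bookkeeping
  have hφ3 : ∀ i, ContDiff ℝ 3 (pd i φ) := fun i => hφ.pd' (by norm_num) i
  have hφ2 : ∀ i j, ContDiff ℝ 2 (pd i (pd j φ)) := fun i j => (hφ3 j).pd' (by norm_num) i
  have hφ1 : ∀ i j k, ContDiff ℝ 1 (pd i (pd j (pd k φ))) :=
    fun i j k => (hφ2 j k).pd' (by norm_num) i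
  have dφ1 : ∀ i, Differentiable ℝ (pd i φ) := fun i => (hφ3 i).differentiable (by norm_num)
  have dφ2 : ∀ i j, Differentiable ℝ (pd i (pd j φ)) :=
    fun i j => (hφ2 i j).differentiable (by norm_num)
  have dφ3 : ∀ i j k, Differentiable ℝ (pd i (pd j (pd k φ))) :=
    fun i j k => (hφ1 i j k).differentiable (by norm_num)
  have hf1 : ∀ i, ContDiff ℝ (⊤ : ℕ∞) (pd i f) := fun i => hfsm.pdtop i
  have hf2 : ∀ i j, ContDiff ℝ (⊤ : ℕ∞) (pd i (pd j f)) := fun i j => (hf1 j).pdtop i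
  have hf3 : ∀ i j k, ContDiff ℝ (⊤ : ℕ∞) (pd i (pd j (pd k f))) := fun i j k => (hf2 j k).pdtop i
  have df : Differentiable ℝ f := hfsm.differentiable (by simp)
  have df1 : ∀ i, Differentiable ℝ (pd i f) := fun i => (hf1 i).differentiable (by simp)
  have df2 : ∀ i j, Differentiable ℝ (pd i (pd j f)) :=
    fun i j => (hf2 i j).differentiable (by simp)
  have hLc : ContDiff ℝ 2 (lap φ) := by
    have h : ContDiff ℝ 2 (fun y => ∑ j, pd j (pd j φ) y) := ContDiff.sum fun j _ => hφ2 j j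
    exact h
  have dL : Differentiable ℝ (lap φ) := hLc.differentiable two_ne_zero
  have dLi : ∀ i, Differentiable ℝ (pd i (lap φ)) :=
    fun i => (hLc.pd' (by norm_num) i : ContDiff ℝ 1 _).differentiable one_ne_zero
  have hNc : ContDiff ℝ 3 (fun y => ∑ j, pd j φ y * pd j φ y) :=
    ContDiff.sum fun j _ => (hφ3 j).mul (hφ3 j)
  have dN : Differentiable ℝ (fun y => ∑ j, pd j φ y * pd j φ y) :=
    hNc.differentiable (by norm_num)
  -- a pointwise product-rule helper
  have mulphi : ∀ (r : EuclideanSpace ℝ (Fin n) → ℝ), Differentiable ℝ r →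
      ∀ (g : EuclideanSpace ℝ (Fin n) → ℂ), Differentiable ℝ g → ∀ i,
      pd i (fun y => ((r y : ℝ) : ℂ) * g y)
        = fun y => ((pd i r y : ℝ) : ℂ) * g y + ((r y : ℝ) : ℂ) * pd i g y := by
    intro r hr g hg i
    rw [pd_mul (differentiable_ofReal hr) hg i, pd_ofReal hr i]
  -- rewriting the operators in explicit coordinate form
  have hdec : ∀ y, fderiv ℝ f y (gradient φ y)
      = ∑ j, ((pd j φ y : ℝ) : ℂ) * pd j f y := by
    intro y
    rw [fderiv_decomp_c f y (gradient φ y)]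
    exact Finset.sum_congr rfl fun j _ => by rw [grad_comp]
  have hAf : (fun y => Aop f y) = fun y =>
      2 * (lam : ℂ) * (∑ j, ((pd j φ y : ℝ) : ℂ) * pd j f y)
        + (lam : ℂ) * (((lap φ y : ℝ) : ℂ) * f y) := by
    funext y
    rw [hAop, hdec y]
    ring
  have hnn : ∀ y, ((lam ^ 2 * ‖gradient φ y‖ ^ 2 : ℝ) : ℂ)
      = ((lam ^ 2 : ℝ) : ℂ) * ((∑ j, pd j φ y * pd j φ y : ℝ) : ℂ) := by
    intro y
    rw [norm_grad_sq]
    push_cast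
    ring
  have hSf : (fun y => Sop f y) = fun y =>
      -(∑ j, pd j (pd j f) y)
        - ((lam ^ 2 : ℝ) : ℂ) * ((∑ j, pd j φ y * pd j φ y : ℝ) : ℂ) * f y := by
    funext y
    rw [hSop, hnn y]
    have h : lap f y = ∑ j, pd j (pd j f) y := rfl
    rw [h]
  -- derivative of the explicit A f
  have dG : Differentiable ℝ (fun y => ∑ j, ((pd j φ y : ℝ) : ℂ) * pd j f y) :=
    Differentiable.fun_sum fun j _ => (differentiable_ofReal (dφ1 j)).mul (df1 j)
  have dH : Differentiable ℝ (fun y => ((lap φ y : ℝ) : ℂ) * f y) :=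
    (differentiable_ofReal dL).mul df
  have hdAf : ∀ i, pd i (fun y =>
      2 * (lam : ℂ) * (∑ j, ((pd j φ y : ℝ) : ℂ) * pd j f y)
        + (lam : ℂ) * (((lap φ y : ℝ) : ℂ) * f y)) = fun y =>
      2 * (lam : ℂ) * (∑ j, (((pd i (pd j φ) y : ℝ) : ℂ) * pd j f y
          + ((pd j φ y : ℝ) : ℂ) * pd i (pd j f) y))
        + (lam : ℂ) * ((((pd i (lap φ)) y : ℝ) : ℂ) * f y
          + ((lap φ y : ℝ) : ℂ) * pd i f y) := by
    intro i
    rw [pd_add (dG.const_mul _) (dH.const_mul _) i, pd_const_mul dG _ i, pd_const_mul dH _ i,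
      pd_sum Finset.univ (fun j _ => (differentiable_ofReal (dφ1 j)).fun_mul (df1 j)) i,
      mulphi (lap φ) dL f df i]
    have key : ∀ j, pd i (fun y => ((pd j φ y : ℝ) : ℂ) * pd j f y)
        = fun y => ((pd i (pd j φ) y : ℝ) : ℂ) * pd j f y
          + ((pd j φ y : ℝ) : ℂ) * pd i (pd j f) y := fun j =>
      mulphi (pd j φ) (dφ1 j) (pd j f) (df1 j) i
    simp only [key]
  -- second derivative of the explicit A f
  have hd2Af : ∀ i, pd i (fun y =>
      2 * (lam : ℂ) * (∑ j, (((pd i (pd j φ) y : ℝ) : ℂ) * pd j f y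
          + ((pd j φ y : ℝ) : ℂ) * pd i (pd j f) y))
        + (lam : ℂ) * ((((pd i (lap φ)) y : ℝ) : ℂ) * f y
          + ((lap φ y : ℝ) : ℂ) * pd i f y)) = fun y =>
      2 * (lam : ℂ) * (∑ j, ((((pd i (pd i (pd j φ)) y : ℝ) : ℂ) * pd j f y
            + ((pd i (pd j φ) y : ℝ) : ℂ) * pd i (pd j f) y)
          + (((pd i (pd j φ) y : ℝ) : ℂ) * pd i (pd j f) y
            + ((pd j φ y : ℝ) : ℂ) * pd i (pd i (pd j f)) y)))
        + (lam : ℂ) * (((((pd i (pd i (lap φ))) y : ℝ) : ℂ) * f y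
            + ((pd i (lap φ) y : ℝ) : ℂ) * pd i f y)
          + (((pd i (lap φ) y : ℝ) : ℂ) * pd i f y
            + ((lap φ y : ℝ) : ℂ) * pd i (pd i f) y)) := by
    intro i
    have dG2 : Differentiable ℝ (fun y => ∑ j, (((pd i (pd j φ) y : ℝ) : ℂ) * pd j f y
        + ((pd j φ y : ℝ) : ℂ) * pd i (pd j f) y)) :=
      Differentiable.fun_sum fun j _ =>
        ((differentiable_ofReal (dφ2 i j)).mul (df1 j)).add
          ((differentiable_ofReal (dφ1 j)).mul (df2 i j))
    have dH2 : Differentiable ℝ (fun y => (((pd i (lap φ)) y : ℝ) : ℂ) * f y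
        + ((lap φ y : ℝ) : ℂ) * pd i f y) :=
      ((differentiable_ofReal (dLi i)).mul df).add
        ((differentiable_ofReal dL).mul (df1 i))
    rw [pd_add (dG2.const_mul _) (dH2.const_mul _) i, pd_const_mul dG2 _ i,
      pd_const_mul dH2 _ i,
      pd_sum Finset.univ (fun j _ =>
        ((differentiable_ofReal (dφ2 i j)).fun_mul (df1 j)).fun_add
          ((differentiable_ofReal (dφ1 j)).fun_mul (df2 i j))) i,
      pd_add ((differentiable_ofReal (dLi i)).fun_mul df)
        ((differentiable_ofReal dL).fun_mul (df1 i)) i,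
      mulphi (pd i (lap φ)) (dLi i) f df i, mulphi (lap φ) dL (pd i f) (df1 i) i]
    have key : ∀ j, pd i (fun y => ((pd i (pd j φ) y : ℝ) : ℂ) * pd j f y
        + ((pd j φ y : ℝ) : ℂ) * pd i (pd j f) y)
        = fun y => (((pd i (pd i (pd j φ)) y : ℝ) : ℂ) * pd j f y
            + ((pd i (pd j φ) y : ℝ) : ℂ) * pd i (pd j f) y)
          + (((pd i (pd j φ) y : ℝ) : ℂ) * pd i (pd j f) y
            + ((pd j φ y : ℝ) : ℂ) * pd i (pd i (pd j f)) y) := by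
      intro j
      rw [pd_add ((differentiable_ofReal (dφ2 i j)).fun_mul (df1 j))
          ((differentiable_ofReal (dφ1 j)).fun_mul (df2 i j)) i,
        mulphi (pd i (pd j φ)) (dφ2 i j) (pd j f) (df1 j) i,
        mulphi (pd j φ) (dφ1 j) (pd i (pd j f)) (df2 i j) i]
    simp only [key]
  -- derivative of lap φ and of N
  have hdL : ∀ i, pd i (lap φ) = fun y => ∑ j, pd i (pd j (pd j φ)) y := by
    intro i
    have h : lap φ = fun y => ∑ j, pd j (pd j φ) y := rfl
    rw [h, pd_sum Finset.univ (fun j _ => dφ2 j j) i]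
  have hdN : ∀ i, pd i (fun y => ∑ j, pd j φ y * pd j φ y)
      = fun y => ∑ j, (pd i (pd j φ) y * pd j φ y + pd j φ y * pd i (pd j φ) y) := by
    intro i
    rw [pd_sum Finset.univ (fun j _ => (dφ1 j).fun_mul (dφ1 j)) i]
    have key : ∀ j, pd i (fun y => pd j φ y * pd j φ y)
        = fun y => pd i (pd j φ) y * pd j φ y + pd j φ y * pd i (pd j φ) y :=
      fun j => pd_mul (dφ1 j) (dφ1 j) i
    simp only [key]
  -- derivative of the explicit S f
  have hdSf : ∀ i, pd i (fun y =>
      -(∑ j, pd j (pd j f) y)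
        - ((lam ^ 2 : ℝ) : ℂ) * ((∑ j, pd j φ y * pd j φ y : ℝ) : ℂ) * f y) = fun y =>
      -(∑ j, pd i (pd j (pd j f)) y)
        - ((((lam ^ 2 : ℝ) : ℂ) * ((pd i (fun z => ∑ j, pd j φ z * pd j φ z) y : ℝ) : ℂ)) * f y
          + (((lam ^ 2 : ℝ) : ℂ) * ((∑ j, pd j φ y * pd j φ y : ℝ) : ℂ)) * pd i f y) := by
    intro i
    have dQ : Differentiable ℝ (fun y => ∑ j, pd j (pd j f) y) :=
      Differentiable.fun_sum fun j _ => df2 j j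
    have dM : Differentiable ℝ (fun y =>
        ((lam ^ 2 : ℝ) : ℂ) * ((∑ j, pd j φ y * pd j φ y : ℝ) : ℂ)) :=
      (differentiable_ofReal dN).const_mul _
    rw [pd_sub dQ.fun_neg ((dM.fun_mul df) : Differentiable ℝ fun y =>
        (((lam ^ 2 : ℝ) : ℂ) * ((∑ j, pd j φ y * pd j φ y : ℝ) : ℂ)) * f y) i,
      pd_neg (a := fun y => ∑ j, pd j (pd j f) y) i,
      pd_sum Finset.univ (fun j _ => df2 j j) i,
      pd_mul dM df i, pd_const_mul (differentiable_ofReal dN) _ i,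
      pd_ofReal dN i]
  -- chained function equalities
  have hAf1 : ∀ i, pd i (fun y => Aop f y) = fun y =>
      2 * (lam : ℂ) * (∑ j, (((pd i (pd j φ) y : ℝ) : ℂ) * pd j f y
          + ((pd j φ y : ℝ) : ℂ) * pd i (pd j f) y))
        + (lam : ℂ) * ((((pd i (lap φ)) y : ℝ) : ℂ) * f y
          + ((lap φ y : ℝ) : ℂ) * pd i f y) :=
    fun i => (congrArg (pd i) hAf).trans (hdAf i)
  have hAf2 : ∀ i, pd i (pd i (fun y => Aop f y)) = fun y =>
      2 * (lam : ℂ) * (∑ j, ((((pd i (pd i (pd j φ)) y : ℝ) : ℂ) * pd j f y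
            + ((pd i (pd j φ) y : ℝ) : ℂ) * pd i (pd j f) y)
          + (((pd i (pd j φ) y : ℝ) : ℂ) * pd i (pd j f) y
            + ((pd j φ y : ℝ) : ℂ) * pd i (pd i (pd j f)) y)))
        + (lam : ℂ) * (((((pd i (pd i (lap φ))) y : ℝ) : ℂ) * f y
            + ((pd i (lap φ) y : ℝ) : ℂ) * pd i f y)
          + (((pd i (lap φ) y : ℝ) : ℂ) * pd i f y
            + ((lap φ y : ℝ) : ℂ) * pd i (pd i f) y)) :=
    fun i => (congrArg (pd i) (hAf1 i)).trans (hd2Af i)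
  have hSf1 : ∀ i, pd i (fun y => Sop f y) = fun y =>
      -(∑ j, pd i (pd j (pd j f)) y)
        - ((((lam ^ 2 : ℝ) : ℂ) * ((pd i (fun z => ∑ j, pd j φ z * pd j φ z) y : ℝ) : ℂ)) * f y
          + (((lam ^ 2 : ℝ) : ℂ) * ((∑ j, pd j φ y * pd j φ y : ℝ) : ℂ)) * pd i f y) :=
    fun i => (congrArg (pd i) hSf).trans (hdSf i)
  -- value of S(Af) at x
  have HSA : Sop (fun y => Aop f y) x
      = -(∑ i, (2 * (lam : ℂ) * (∑ j, ((((pd i (pd i (pd j φ)) x : ℝ) : ℂ) * pd j f x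
            + ((pd i (pd j φ) x : ℝ) : ℂ) * pd i (pd j f) x)
          + (((pd i (pd j φ) x : ℝ) : ℂ) * pd i (pd j f) x
            + ((pd j φ x : ℝ) : ℂ) * pd i (pd i (pd j f)) x)))
        + (lam : ℂ) * (((((pd i (pd i (lap φ))) x : ℝ) : ℂ) * f x
            + ((pd i (lap φ) x : ℝ) : ℂ) * pd i f x)
          + (((pd i (lap φ) x : ℝ) : ℂ) * pd i f x
            + ((lap φ x : ℝ) : ℂ) * pd i (pd i f) x))))
      - ((lam ^ 2 : ℝ) : ℂ) * ((∑ j, pd j φ x * pd j φ x : ℝ) : ℂ)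
        * (2 * (lam : ℂ) * (∑ j, ((pd j φ x : ℝ) : ℂ) * pd j f x)
          + (lam : ℂ) * (((lap φ x : ℝ) : ℂ) * f x)) := by
    rw [hSop, hnn x]
    have e1 : lap (fun y => Aop f y) x = ∑ i, pd i (pd i (fun y => Aop f y)) x := rfl
    rw [e1, Finset.sum_congr rfl (fun i _ => congrFun (hAf2 i) x), congrFun hAf x]
  -- value of A(Sf) at x
  have hfder : fderiv ℝ (fun y => Sop f y) x (gradient φ x)
      = ∑ i, ((pd i φ x : ℝ) : ℂ) * (-(∑ j, pd i (pd j (pd j f)) x)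
        - ((((lam ^ 2 : ℝ) : ℂ)
              * ((pd i (fun z => ∑ j, pd j φ z * pd j φ z) x : ℝ) : ℂ)) * f x
          + (((lam ^ 2 : ℝ) : ℂ) * ((∑ j, pd j φ x * pd j φ x : ℝ) : ℂ)) * pd i f x)) := by
    rw [fderiv_decomp_c]
    refine Finset.sum_congr rfl fun i _ => ?_
    rw [grad_comp, congrFun (hSf1 i) x]
  have HAS : Aop (fun y => Sop f y) x
      = 2 * (lam : ℂ) * (∑ i, ((pd i φ x : ℝ) : ℂ) * (-(∑ j, pd i (pd j (pd j f)) x)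
          - ((((lam ^ 2 : ℝ) : ℂ)
                * ((pd i (fun z => ∑ j, pd j φ z * pd j φ z) x : ℝ) : ℂ)) * f x
            + (((lam ^ 2 : ℝ) : ℂ) * ((∑ j, pd j φ x * pd j φ x : ℝ) : ℂ)) * pd i f x)))
        + (lam : ℂ) * ((lap φ x : ℝ) : ℂ) * (-(∑ j, pd j (pd j f) x)
          - ((lam ^ 2 : ℝ) : ℂ) * ((∑ j, pd j φ x * pd j φ x : ℝ) : ℂ) * f x) := by
    rw [hAop, hfder, congrFun hSf x]
  -- right-hand side pieces
  have hdiv : ∀ i, (fderiv ℝ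
      (fun y => ∑ j, ((fderiv ℝ (fun z => fderiv ℝ φ z (EuclideanSpace.single j 1)) y
          (EuclideanSpace.single i 1) : ℝ) : ℂ) * fderiv ℝ f y (EuclideanSpace.single j 1)) x
      (EuclideanSpace.single i 1))
      = ∑ j, (((pd i (pd i (pd j φ)) x : ℝ) : ℂ) * pd j f x
          + ((pd i (pd j φ) x : ℝ) : ℂ) * pd i (pd j f) x) := by
    intro i
    have h0 : pd i (fun y => ∑ j, ((pd i (pd j φ) y : ℝ) : ℂ) * pd j f y)
        = fun y => ∑ j, (((pd i (pd i (pd j φ)) y : ℝ) : ℂ) * pd j f y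
            + ((pd i (pd j φ) y : ℝ) : ℂ) * pd i (pd j f) y) := by
      rw [pd_sum Finset.univ (fun j _ => (differentiable_ofReal (dφ2 i j)).fun_mul (df1 j)) i]
      have key : ∀ j, pd i (fun y => ((pd i (pd j φ) y : ℝ) : ℂ) * pd j f y)
          = fun y => ((pd i (pd i (pd j φ)) y : ℝ) : ℂ) * pd j f y
            + ((pd i (pd j φ) y : ℝ) : ℂ) * pd i (pd j f) y :=
        fun j => mulphi (pd i (pd j φ)) (dφ2 i j) (pd j f) (df1 j) i
      simp only [key]
    exact congrFun h0 x
  have hinner : ⟪fderiv ℝ (gradient φ) x (gradient φ x), gradient φ x⟫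
      = ∑ i, ∑ j, pd i φ x * (pd j φ x * pd j (pd i φ) x) := by
    have hdfd : DifferentiableAt ℝ (fderiv ℝ φ) x :=
      (hφ.fderiv_right (show (1 : WithTop ℕ∞) + 1 ≤ 4 by norm_num)).differentiable one_ne_zero x
    rw [grad_inner φ x (gradient φ x) (gradient φ x) hdfd]
    have h1 : (fun y => fderiv ℝ φ y (gradient φ x))
        = fun y => ∑ i, gradient φ x i * pd i φ y :=
      funext fun y => fderiv_decomp_r φ y (gradient φ x)
    rw [h1, fderiv_fun_sum (fun i _ => ((dφ1 i) x).const_mul (gradient φ x i)),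
      ContinuousLinearMap.sum_apply]
    refine Finset.sum_congr rfl fun i _ => ?_
    rw [fderiv_const_mul ((dφ1 i) x) (gradient φ x i), ContinuousLinearMap.smul_apply,
      smul_eq_mul, fderiv_decomp_r (pd i φ) x (gradient φ x), grad_comp, Finset.mul_sum]
    exact Finset.sum_congr rfl fun j _ => by rw [grad_comp]
  have hlap4 : lap (lap φ) x = ∑ i, pd i (pd i (lap φ)) x := rfl
  rw [HSA, HAS, Finset.sum_congr rfl (fun i _ => hdiv i), hinner, hlap4]
  -- symmetry facts
  have sym3f : ∀ i j, pd j (pd i (pd i f)) x = pd i (pd i (pd j f)) x := by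
    intro i j
    have h1 : pd j (pd i (pd i f)) x = pd i (pd j (pd i f)) x :=
      pd_comm ((hf1 i).of_le (by exact WithTop.coe_le_coe.mpr (le_top : (2 : ℕ∞) ≤ ⊤))) j i x
    have h2 : pd j (pd i f) = pd i (pd j f) :=
      funext fun y => pd_comm (hfsm.of_le (by exact WithTop.coe_le_coe.mpr (le_top : (2 : ℕ∞) ≤ ⊤))) j i y
    rw [h1, h2]
  have sym3phi : ∀ i j, pd j (pd i (pd i φ)) x = pd i (pd i (pd j φ)) x := by
    intro i j
    have h1 : pd j (pd i (pd i φ)) x = pd i (pd j (pd i φ)) x :=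
      pd_comm ((hφ3 i).of_le (by norm_num)) j i x
    have h2 : pd j (pd i φ) = pd i (pd j φ) :=
      funext fun y => pd_comm (hφ.of_le (by norm_num)) j i y
    rw [h1, h2]
  have sym2phi : ∀ i j, pd j (pd i φ) x = pd i (pd j φ) x :=
    fun i j => pd_comm (hφ.of_le (by norm_num)) j i x
  -- swap identities
  have W1 : ∑ i, ((pd i (lap φ) x : ℝ) : ℂ) * pd i f x
      = ∑ i, ∑ j, ((pd i (pd i (pd j φ)) x : ℝ) : ℂ) * pd j f x := by
    have step1 : ∑ i, ((pd i (lap φ) x : ℝ) : ℂ) * pd i f x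
        = ∑ i, ∑ j, ((pd i (pd j (pd j φ)) x : ℝ) : ℂ) * pd i f x := by
      refine Finset.sum_congr rfl fun i _ => ?_
      rw [show pd i (lap φ) x = ∑ j, pd i (pd j (pd j φ)) x from congrFun (hdL i) x,
        Complex.ofReal_sum, Finset.sum_mul]
    rw [step1, Finset.sum_comm]
    refine Finset.sum_congr rfl fun i _ => Finset.sum_congr rfl fun j _ => ?_
    rw [sym3phi i j]
  have W2 : ∑ i, ((pd i φ x : ℝ) : ℂ) * (∑ j, pd i (pd j (pd j f)) x)
      = ∑ i, ∑ j, ((pd j φ x : ℝ) : ℂ) * pd i (pd i (pd j f)) x := by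
    have step1 : ∑ i, ((pd i φ x : ℝ) : ℂ) * (∑ j, pd i (pd j (pd j f)) x)
        = ∑ i, ∑ j, ((pd i φ x : ℝ) : ℂ) * pd i (pd j (pd j f)) x :=
      Finset.sum_congr rfl fun i _ => Finset.mul_sum _ _ _
    rw [step1, Finset.sum_comm]
    refine Finset.sum_congr rfl fun i _ => Finset.sum_congr rfl fun j _ => ?_
    rw [sym3f i j]
  have W3 : ∑ i, ((pd i φ x : ℝ) : ℂ)
        * (∑ j, (((pd j φ x : ℝ) : ℂ) * ((pd i (pd j φ) x : ℝ) : ℂ)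
          + ((pd j φ x : ℝ) : ℂ) * ((pd i (pd j φ) x : ℝ) : ℂ)))
      = (∑ i, ∑ j, ((pd i φ x : ℝ) : ℂ)
            * (((pd j φ x : ℝ) : ℂ) * ((pd i (pd j φ) x : ℝ) : ℂ)))
        + ∑ i, ∑ j, ((pd i φ x : ℝ) : ℂ)
            * (((pd j φ x : ℝ) : ℂ) * ((pd i (pd j φ) x : ℝ) : ℂ)) := by
    have per : ∀ i ∈ (Finset.univ : Finset (Fin n)), ((pd i φ x : ℝ) : ℂ)
        * (∑ j, (((pd j φ x : ℝ) : ℂ) * ((pd i (pd j φ) x : ℝ) : ℂ)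
          + ((pd j φ x : ℝ) : ℂ) * ((pd i (pd j φ) x : ℝ) : ℂ)))
        = ∑ j, (((pd i φ x : ℝ) : ℂ) * (((pd j φ x : ℝ) : ℂ) * ((pd i (pd j φ) x : ℝ) : ℂ))
          + ((pd i φ x : ℝ) : ℂ) * (((pd j φ x : ℝ) : ℂ) * ((pd i (pd j φ) x : ℝ) : ℂ))) := by
      intro i _
      rw [Finset.mul_sum]
      exact Finset.sum_congr rfl fun j _ => by ring
    rw [Finset.sum_congr rfl per]
    simp only [Finset.sum_add_distrib]
  -- canonical forms
  have hA4 : ((∑ i, ∑ j, pd i φ x * (pd j φ x * pd j (pd i φ) x) : ℝ) : ℂ)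
      = ∑ i, ∑ j, ((pd i φ x : ℝ) : ℂ)
          * (((pd j φ x : ℝ) : ℂ) * ((pd i (pd j φ) x : ℝ) : ℂ)) := by
    rw [Complex.ofReal_sum]
    refine Finset.sum_congr rfl fun i _ => ?_
    rw [Complex.ofReal_sum]
    refine Finset.sum_congr rfl fun j _ => ?_
    rw [sym2phi i j]
    push_cast
    ring
  have hA5 : ((∑ i, pd i (pd i (lap φ)) x : ℝ) : ℂ)
      = ∑ i, ((pd i (pd i (lap φ)) x : ℝ) : ℂ) := Complex.ofReal_sum _ _
  have hA6 : ∑ i, ∑ j, (((pd i (pd i (pd j φ)) x : ℝ) : ℂ) * pd j f x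
        + ((pd i (pd j φ) x : ℝ) : ℂ) * pd i (pd j f) x)
      = (∑ i, ∑ j, ((pd i (pd i (pd j φ)) x : ℝ) : ℂ) * pd j f x)
        + ∑ i, ∑ j, ((pd i (pd j φ) x : ℝ) : ℂ) * pd i (pd j f) x := by
    simp only [Finset.sum_add_distrib]
  have hA1 : ∑ i, (2 * (lam : ℂ) * (∑ j, ((((pd i (pd i (pd j φ)) x : ℝ) : ℂ) * pd j f x
            + ((pd i (pd j φ) x : ℝ) : ℂ) * pd i (pd j f) x)
          + (((pd i (pd j φ) x : ℝ) : ℂ) * pd i (pd j f) x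
            + ((pd j φ x : ℝ) : ℂ) * pd i (pd i (pd j f)) x)))
        + (lam : ℂ) * (((((pd i (pd i (lap φ))) x : ℝ) : ℂ) * f x
            + ((pd i (lap φ) x : ℝ) : ℂ) * pd i f x)
          + (((pd i (lap φ) x : ℝ) : ℂ) * pd i f x
            + ((lap φ x : ℝ) : ℂ) * pd i (pd i f) x)))
      = 2 * (lam : ℂ) * (((∑ i, ∑ j, ((pd i (pd i (pd j φ)) x : ℝ) : ℂ) * pd j f x)
            + ∑ i, ∑ j, ((pd i (pd j φ) x : ℝ) : ℂ) * pd i (pd j f) x)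
          + ((∑ i, ∑ j, ((pd i (pd j φ) x : ℝ) : ℂ) * pd i (pd j f) x)
            + ∑ i, ∑ j, ((pd j φ x : ℝ) : ℂ) * pd i (pd i (pd j f)) x))
        + (lam : ℂ) * ((((∑ i, ((pd i (pd i (lap φ)) x : ℝ) : ℂ)) * f x)
            + ∑ i, ((pd i (lap φ) x : ℝ) : ℂ) * pd i f x)
          + ((∑ i, ((pd i (lap φ) x : ℝ) : ℂ) * pd i f x)
            + ((lap φ x : ℝ) : ℂ) * ∑ i, pd i (pd i f) x)) := by
    rw [Finset.sum_add_distrib]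
    congr 1
    · rw [← Finset.mul_sum]
      congr 1
      simp only [Finset.sum_add_distrib]
    · rw [← Finset.mul_sum]
      congr 1
      simp only [Finset.sum_add_distrib]
      rw [← Finset.sum_mul, ← Finset.mul_sum]
  have hA3 : ∑ i, ((pd i φ x : ℝ) : ℂ) * (-(∑ j, pd i (pd j (pd j f)) x)
        - ((((lam ^ 2 : ℝ) : ℂ)
              * ((pd i (fun z => ∑ j, pd j φ z * pd j φ z) x : ℝ) : ℂ)) * f x
          + (((lam ^ 2 : ℝ) : ℂ) * ((∑ j, pd j φ x * pd j φ x : ℝ) : ℂ)) * pd i f x))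
      = -(∑ i, ((pd i φ x : ℝ) : ℂ) * (∑ j, pd i (pd j (pd j f)) x))
        - (((lam ^ 2 : ℝ) : ℂ) * (∑ i, ((pd i φ x : ℝ) : ℂ)
              * (∑ j, (((pd j φ x : ℝ) : ℂ) * ((pd i (pd j φ) x : ℝ) : ℂ)
                + ((pd j φ x : ℝ) : ℂ) * ((pd i (pd j φ) x : ℝ) : ℂ)))) * f x
          + ((lam ^ 2 : ℝ) : ℂ) * ((∑ j, pd j φ x * pd j φ x : ℝ) : ℂ)
              * ∑ i, ((pd i φ x : ℝ) : ℂ) * pd i f x) := by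
    have per : ∀ i ∈ (Finset.univ : Finset (Fin n)),
        ((pd i φ x : ℝ) : ℂ) * (-(∑ j, pd i (pd j (pd j f)) x)
          - ((((lam ^ 2 : ℝ) : ℂ)
                * ((pd i (fun z => ∑ j, pd j φ z * pd j φ z) x : ℝ) : ℂ)) * f x
            + (((lam ^ 2 : ℝ) : ℂ) * ((∑ j, pd j φ x * pd j φ x : ℝ) : ℂ)) * pd i f x))
        = -(((pd i φ x : ℝ) : ℂ) * (∑ j, pd i (pd j (pd j f)) x))
          + (-(((lam ^ 2 : ℝ) : ℂ) * (((pd i φ x : ℝ) : ℂ)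
                * (∑ j, (((pd j φ x : ℝ) : ℂ) * ((pd i (pd j φ) x : ℝ) : ℂ)
                  + ((pd j φ x : ℝ) : ℂ) * ((pd i (pd j φ) x : ℝ) : ℂ)))) * f x)
            + -(((lam ^ 2 : ℝ) : ℂ) * ((∑ j, pd j φ x * pd j φ x : ℝ) : ℂ)
                * (((pd i φ x : ℝ) : ℂ) * pd i f x))) := by
      intro i _
      rw [show pd i (fun z => ∑ j, pd j φ z * pd j φ z) x
          = ∑ j, (pd i (pd j φ) x * pd j φ x + pd j φ x * pd i (pd j φ) x) from
          congrFun (hdN i) x, Complex.ofReal_sum]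
      rw [show ∑ j, ((pd i (pd j φ) x * pd j φ x + pd j φ x * pd i (pd j φ) x : ℝ) : ℂ)
          = ∑ j, (((pd j φ x : ℝ) : ℂ) * ((pd i (pd j φ) x : ℝ) : ℂ)
            + ((pd j φ x : ℝ) : ℂ) * ((pd i (pd j φ) x : ℝ) : ℂ)) from
          Finset.sum_congr rfl fun j _ => by push_cast; ring]
      ring
    rw [Finset.sum_congr rfl per, Finset.sum_add_distrib, Finset.sum_neg_distrib,
      Finset.sum_add_distrib, Finset.sum_neg_distrib, Finset.sum_neg_distrib,
      show ∑ i, ((lam ^ 2 : ℝ) : ℂ) * (((pd i φ x : ℝ) : ℂ)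
          * (∑ j, (((pd j φ x : ℝ) : ℂ) * ((pd i (pd j φ) x : ℝ) : ℂ)
            + ((pd j φ x : ℝ) : ℂ) * ((pd i (pd j φ) x : ℝ) : ℂ)))) * f x
        = ((lam ^ 2 : ℝ) : ℂ) * (∑ i, ((pd i φ x : ℝ) : ℂ)
              * (∑ j, (((pd j φ x : ℝ) : ℂ) * ((pd i (pd j φ) x : ℝ) : ℂ)
                + ((pd j φ x : ℝ) : ℂ) * ((pd i (pd j φ) x : ℝ) : ℂ)))) * f x from by
        rw [← Finset.sum_mul, ← Finset.mul_sum],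
      show ∑ i, ((lam ^ 2 : ℝ) : ℂ) * ((∑ j, pd j φ x * pd j φ x : ℝ) : ℂ)
            * (((pd i φ x : ℝ) : ℂ) * pd i f x)
        = ((lam ^ 2 : ℝ) : ℂ) * ((∑ j, pd j φ x * pd j φ x : ℝ) : ℂ)
            * ∑ i, ((pd i φ x : ℝ) : ℂ) * pd i f x from (Finset.mul_sum _ _ _).symm]
    ring
  rw [hA1, hA3, hA4, hA5, hA6, W1, W2, W3]
  have hmu : ((lam ^ 2 : ℝ) : ℂ) = (lam : ℂ) ^ 2 := by push_cast; ring
  rw [hmu]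
  ring
end

section
/- There exist real constants a₁,…,a₅ such that the radial function φ(r) = a₁r² + a₂r⁴ + a₃r⁶ + a₄r⁸ for 0 ≤ r ≤ 1 and φ(r) = 3r - ∫₁^r ds/(1+log s) + a₅ for r > 1 defines a C⁴ function on ℝⁿ (as x ↦ φ(|x|)) which is strictly convex on compact sets, satisfies φ(0) = 0, φ(r) > 0 for r > 0, and φ(r) ≤ Mr for all r ≥ 0 and some M > 0. -/
/-!
On `[0, 1]` the profile is a polynomial in `r²`, hence smooth near the origin; the coefficients
`a₁, …, a₄, a₅` are chosen so that the profile and its first four derivatives agree at `r = 1`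
with those of the outer piece `ψ(r) = 3r - ∫₁^r ds / (1 + log s) + a₅`, namely
`415/384, 2, 1, -3, 14`. Gluing therefore gives a `C⁴` profile on `(1/e, ∞)`, where `ψ` lives.

For a radial function `F(‖x‖²)` the Hessian is `2F'(t) I + 4F''(t) x xᵀ` with `t = ‖x‖²`; by
Cauchy–Schwarz it is positive definite as soon as `F'(t) > 0` and `F'(t) + 2t F''(t) > 0`. Inside
the unit ball these are polynomial inequalities on `[0, 1]`; outside, writing `F(t) = φ(√t)`, they
become `φ' > 0` and `φ'' > 0`, which hold because `ψ' = 3 - 1/(1 + log r) ≥ 2` and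
`ψ'' = 1 / (r (1 + log r)²)`. Positivity and linear growth follow from
`0 ≤ ∫₁^r ds / (1 + log s) ≤ r - 1`.
-/

open Real Set Filter Topology Polynomial
open scoped RealInnerProductSpace

theorem HasDerivAt.ite_le {A B A' B' : ℝ → ℝ} {a r : ℝ} (hA : HasDerivAt A (A' r) r)
    (hB : HasDerivAt B (B' r) r) (hval : A a = B a) (hder : A' a = B' a) :
    HasDerivAt (fun s => if s ≤ a then A s else B s) (if r ≤ a then A' r else B' r) r := by
  rcases lt_trichotomy r a with h | rfl | h
  · rw [if_pos h.le]
    refine hA.congr_of_eventuallyEq ?_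
    filter_upwards [Iio_mem_nhds h] with s hs using if_pos hs.le
  · rw [if_pos le_rfl]
    have hleft : HasDerivWithinAt (fun s => if s ≤ r then A s else B s) (A' r) (Iic r) r :=
      hA.hasDerivWithinAt.congr (fun s hs => if_pos hs) (if_pos le_rfl)
    have hright : HasDerivWithinAt (fun s => if s ≤ r then A s else B s) (A' r) (Ici r) r := by
      rw [hder]
      refine hB.hasDerivWithinAt.congr (fun s hs => ?_) (by rw [if_pos le_rfl, hval])
      rcases (mem_Ici.mp hs).eq_or_lt with rfl | hlt
      · rw [if_pos le_rfl, hval]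
      · rw [if_neg hlt.not_ge]
    simpa [Iic_union_Ici] using hleft.union hright
  · rw [if_neg h.not_ge]
    refine hB.congr_of_eventuallyEq ?_
    filter_upwards [Ioi_mem_nhds h] with s hs using if_neg hs.not_ge

theorem ContinuousOn.ite_le {A B : ℝ → ℝ} {U : Set ℝ} {a : ℝ} (hA : ContinuousOn A U)
    (hB : ContinuousOn B U) (hval : A a = B a) :
    ContinuousOn (fun s => if s ≤ a then A s else B s) U := by
  refine ContinuousOn.if (fun s hs => ?_) (hA.mono inter_subset_left) (hB.mono inter_subset_left)
  obtain rfl : s = a := frontier_Iic_subset a hs.2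
  exact hval

theorem contDiffOn_of_hasDerivAt_succ {U : Set ℝ} (hU : IsOpen U) :
    ∀ (k : ℕ) (D : ℕ → ℝ → ℝ), (∀ i < k, ∀ r ∈ U, HasDerivAt (D i) (D (i + 1) r) r) →
      ContinuousOn (D k) U → ContDiffOn ℝ k (D 0) U
  | 0, _, _, hc => contDiffOn_zero.mpr hc
  | k + 1, D, hD, hc => by
    have hderiv : ∀ r ∈ U, deriv (D 0) r = D 1 r := fun r hr => (hD 0 k.succ_pos r hr).deriv
    rw [Nat.cast_add, Nat.cast_one, contDiffOn_succ_iff_deriv_of_isOpen hU]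
    refine ⟨fun r hr => (hD 0 k.succ_pos r hr).differentiableAt.differentiableWithinAt,
      by simp, ContDiffOn.congr ?_ hderiv⟩
    exact contDiffOn_of_hasDerivAt_succ hU k (fun i => D (i + 1))
      (fun i hi => hD (i + 1) (by omega)) hc

section RadialFunctions

variable {E : Type*} [NormedAddCommGroup E] [InnerProductSpace ℝ E]

theorem hasGradientAt_comp_norm_sq [CompleteSpace E] {F : ℝ → ℝ} {d : ℝ} {x : E}
    (hF : HasDerivAt F d (‖x‖ ^ 2)) :
    HasGradientAt (fun y => F (‖y‖ ^ 2)) ((2 * d) • x) x := by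
  rw [hasGradientAt_iff_hasFDerivAt]
  refine (hF.comp_hasFDerivAt x (hasStrictFDerivAt_norm_sq x).hasFDerivAt).congr_fderiv ?_
  ext v
  simp only [smul_apply, coe_innerSL_apply, nsmul_eq_mul, Nat.cast_ofNat,
    smul_eq_mul, map_smul, InnerProductSpace.toDual_apply_apply]
  ring

theorem hasFDerivAt_comp_norm_sq_smul {c : ℝ → ℝ} {d : ℝ} {x : E}
    (hc : HasDerivAt c d (‖x‖ ^ 2)) :
    HasFDerivAt (fun y => c (‖y‖ ^ 2) • y)
      (c (‖x‖ ^ 2) • ContinuousLinearMap.id ℝ E + (d • 2 • innerSL ℝ x).smulRight x) x :=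
  (hc.comp_hasFDerivAt x (hasStrictFDerivAt_norm_sq x).hasFDerivAt).smul (hasFDerivAt_id x)

theorem add_mul_inner_sq_pos {a b : ℝ} {x v : E} (ha : 0 < a) (hab : 0 < a + b * ‖x‖ ^ 2)
    (hv : v ≠ 0) : 0 < a * ‖v‖ ^ 2 + b * ⟪x, v⟫ ^ 2 := by
  have hv₂ : 0 < ‖v‖ ^ 2 := by positivity
  rcases le_or_gt 0 b with hb | hb
  · positivity
  · have hCS : ⟪x, v⟫ ^ 2 ≤ (‖x‖ * ‖v‖) ^ 2 := by
      rw [← sq_abs]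
      exact pow_le_pow_left₀ (abs_nonneg _) (abs_real_inner_le_norm x v) 2
    nlinarith

theorem inner_fderiv_gradient_pos [CompleteSpace E] {f : E → ℝ} {F F' : ℝ → ℝ} {U : Set E}
    {x v : E} {d : ℝ} (hU : IsOpen U) (hx : x ∈ U) (hf : ∀ y ∈ U, f y = F (‖y‖ ^ 2))
    (hF : ∀ y ∈ U, HasDerivAt F (F' (‖y‖ ^ 2)) (‖y‖ ^ 2)) (hF' : HasDerivAt F' d (‖x‖ ^ 2))
    (h₁ : 0 < F' (‖x‖ ^ 2)) (h₂ : 0 < F' (‖x‖ ^ 2) + 2 * ‖x‖ ^ 2 * d) (hv : v ≠ 0) :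
    0 < ⟪fderiv ℝ (gradient f) x v, v⟫ := by
  have hgrad : gradient f =ᶠ[𝓝 x] fun y => (2 * F' (‖y‖ ^ 2)) • y := by
    filter_upwards [hU.mem_nhds hx] with y hy
    refine ((hasGradientAt_comp_norm_sq (hF y hy)).congr_of_eventuallyEq ?_).gradient
    filter_upwards [hU.mem_nhds hy] with z hz using hf z hz
  rw [hgrad.fderiv_eq, (hasFDerivAt_comp_norm_sq_smul (hF'.const_mul 2)).fderiv]
  convert add_mul_inner_sq_pos (b := 4 * d) (x := x) (mul_pos two_pos h₁) (by linarith) hv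
    using 1
  simp only [add_apply, smul_apply,
    ContinuousLinearMap.id_apply, ContinuousLinearMap.smulRight_apply, coe_innerSL_apply,
    nsmul_eq_mul, Nat.cast_ofNat, smul_eq_mul, inner_add_left, real_inner_smul_left,
    real_inner_self_eq_norm_sq]
  ring

theorem inner_fderiv_gradient_pos_of_comp_norm [CompleteSpace E] {f : E → ℝ} {φ φ' : ℝ → ℝ}
    {U : Set E} {x v : E} {d : ℝ} (hU : IsOpen U) (hU₀ : (0 : E) ∉ U) (hx : x ∈ U)
    (hf : ∀ y ∈ U, f y = φ ‖y‖) (hφ : ∀ y ∈ U, HasDerivAt φ (φ' ‖y‖) ‖y‖)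
    (hφ' : HasDerivAt φ' d ‖x‖) (h₁ : 0 < φ' ‖x‖) (h₂ : 0 < d) (hv : v ≠ 0) :
    0 < ⟪fderiv ℝ (gradient f) x v, v⟫ := by
  have hpos : ∀ y ∈ U, 0 < ‖y‖ := fun y hy => norm_pos_iff.mpr (ne_of_mem_of_not_mem hy hU₀)
  have hsqrt : ∀ y ∈ U, HasDerivAt sqrt (1 / (2 * ‖y‖)) (‖y‖ ^ 2) := fun y hy => by
    simpa [Real.sqrt_sq (hpos y hy).le] using hasDerivAt_sqrt (pow_pos (hpos y hy) 2).ne'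
  have hroot : ∀ y : E, ‖y‖ = √(‖y‖ ^ 2) := fun y => (Real.sqrt_sq (norm_nonneg y)).symm
  have hx₀ := hpos x hx
  -- `F = φ ∘ √` has `F'(r²) = φ'(r) / (2r)` and `F'(r²) + 2r² F''(r²) = φ''(r) / 2`.
  have hF' : HasDerivAt (fun t => φ' √t / (2 * √t))
      ((d * (2 * ‖x‖) - φ' ‖x‖ * (2 * 1)) / (2 * ‖x‖) ^ 2 * (1 / (2 * ‖x‖))) (‖x‖ ^ 2) :=
    (hφ'.div ((hasDerivAt_id' ‖x‖).const_mul 2) (by positivity)).comp_of_eq _ (hsqrt x hx)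
      (hroot x)
  refine inner_fderiv_gradient_pos (F := fun t => φ √t) hU hx
    (fun y hy => by rw [hf y hy, ← hroot]) (fun y hy => ?_) hF' ?_ ?_ hv
  · rw [← hroot]
    exact ((hφ y hy).comp_of_eq _ (hsqrt y hy) (hroot y)).congr_deriv (by ring)
  · rw [← hroot]
    positivity
  · rw [← hroot]
    field_simp
    nlinarith [mul_pos hx₀ h₂]

theorem contDiff_comp_norm {g Q : ℝ → ℝ} {n : WithTop ℕ∞} {ρ₀ ρ₁ : ℝ} (hρ₀ : 0 ≤ ρ₀)
    (hρ : ρ₀ < ρ₁) (hQ : ContDiff ℝ n Q) (hgQ : ∀ r, 0 ≤ r → r < ρ₁ → g r = Q (r ^ 2))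
    (hg : ContDiffOn ℝ n g (Ioi ρ₀)) : ContDiff ℝ n (fun x : E => g ‖x‖) := by
  refine contDiff_iff_contDiffAt.mpr fun x => ?_
  rcases lt_or_ge ‖x‖ ρ₁ with hx | hx
  · refine (hQ.comp (contDiff_norm_sq ℝ)).contDiffAt.congr_of_eventuallyEq ?_
    filter_upwards [(isOpen_lt continuous_norm continuous_const).mem_nhds hx] with y hy
    exact hgQ _ (norm_nonneg y) hy
  · have hx₀ : ρ₀ < ‖x‖ := hρ.trans_le hx
    exact (hg.contDiffAt (Ioi_mem_nhds hx₀)).comp x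
      (contDiffAt_norm ℝ (norm_pos_iff.mp (hρ₀.trans_lt hx₀)))

end RadialFunctions

noncomputable def innerPolySq : ℝ[X] :=
  C (103 / 96) * X + C (9 / 64) * X ^ 2 + C (-17 / 96) * X ^ 3 + C (17 / 384) * X ^ 4

noncomputable def innerPoly : ℝ[X] := innerPolySq.comp (X ^ 2)

noncomputable def outerDeriv : ℕ → ℝ → ℝ
  | 0, r => 3 * r - (∫ s in (1 : ℝ)..r, 1 / (1 + log s)) + -737 / 384
  | 1, r => 3 - (1 + log r)⁻¹
  | 2, r => r⁻¹ * (1 + log r)⁻¹ ^ 2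
  | 3, r => -(r⁻¹ ^ 2 * ((1 + log r)⁻¹ ^ 2 + 2 * (1 + log r)⁻¹ ^ 3))
  | 4, r => r⁻¹ ^ 3 * (2 * (1 + log r)⁻¹ ^ 2 + 6 * (1 + log r)⁻¹ ^ 3 + 6 * (1 + log r)⁻¹ ^ 4)
  | _, _ => 0

theorem eval_innerPoly (r : ℝ) : innerPoly.eval r = innerPolySq.eval (r ^ 2) := by
  simp [innerPoly]

theorem innerPolySq_pos {t : ℝ} (h₀ : 0 < t) (h₁ : t ≤ 1) : 0 < innerPolySq.eval t := by
  simp only [innerPolySq, eval_add, eval_mul, eval_C, eval_X, eval_pow]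
  nlinarith [pow_pos h₀ 2, pow_pos h₀ 3, pow_pos h₀ 4, mul_nonneg h₀.le (sub_nonneg.2 h₁)]

theorem innerPolySq_le {t : ℝ} (h₀ : 0 ≤ t) (h₁ : t ≤ 1) : innerPolySq.eval t ≤ 3 * t := by
  simp only [innerPolySq, eval_add, eval_mul, eval_C, eval_X, eval_pow]
  nlinarith [pow_nonneg h₀ 2, pow_nonneg h₀ 3, pow_nonneg h₀ 4, mul_nonneg h₀ (sub_nonneg.2 h₁)]

theorem derivative_innerPolySq_pos {t : ℝ} (h₀ : 0 ≤ t) (h₁ : t ≤ 1) :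
    0 < (derivative innerPolySq).eval t := by
  simp only [innerPolySq, derivative_add, derivative_C_mul_X, derivative_C_mul_X_pow,
    eval_add, eval_C, eval_mul, eval_X, eval_pow, Nat.reduceSub, Nat.cast_ofNat]
  nlinarith [mul_nonneg h₀ h₀, mul_nonneg (mul_nonneg h₀ h₀) h₀,
    mul_nonneg h₀ (sub_nonneg.2 h₁), sq_nonneg (1 - t)]

theorem derivative_innerPolySq_add_pos {t : ℝ} (h₀ : 0 ≤ t) (h₁ : t ≤ 1) :
    0 < (derivative innerPolySq).eval t + 2 * t * (derivative (derivative innerPolySq)).eval t := by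
  simp only [innerPolySq, derivative_add, derivative_C_mul_X, derivative_C_mul_X_pow, derivative_C,
    eval_add, eval_C, eval_mul, eval_X, eval_pow, eval_zero, Nat.reduceSub, Nat.cast_ofNat]
  nlinarith [mul_nonneg h₀ (sub_nonneg.2 h₁), mul_nonneg (mul_nonneg h₀ h₀) (sub_nonneg.2 h₁),
    mul_nonneg (mul_nonneg h₀ h₀) h₀, sq_nonneg (1 - t)]

theorem eval_iterate_derivative_innerPoly_one {i : ℕ} (hi : i ≤ 4) :
    (derivative^[i] innerPoly).eval 1 = outerDeriv i 1 := by
  interval_cases i <;> simp only [Function.iterate_succ_apply', Function.iterate_zero_apply] <;>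
    norm_num [innerPoly, innerPolySq, outerDeriv, ← pow_mul]

theorem exp_neg_one_lt_one : exp (-1) < 1 := exp_lt_one_iff.mpr (by norm_num)

theorem one_add_log_pos {r : ℝ} (hr : exp (-1) < r) : 0 < 1 + log r := by
  have := (lt_log_iff_exp_lt (exp_pos _ |>.trans hr)).2 hr
  linarith

theorem hasDerivAt_inv_one_add_log {r : ℝ} (hr : exp (-1) < r) :
    HasDerivAt (fun s => (1 + log s)⁻¹) (-(r⁻¹ * (1 + log r)⁻¹ ^ 2)) r :=
  (((hasDerivAt_log (exp_pos _ |>.trans hr).ne').const_add 1).inv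
    (one_add_log_pos hr).ne').congr_deriv (by rw [inv_pow, neg_div, div_eq_mul_inv])

theorem continuousOn_one_div_one_add_log :
    ContinuousOn (fun s => 1 / (1 + log s)) (Ioi (exp (-1))) := by
  simp only [one_div]
  exact fun r hr => (hasDerivAt_inv_one_add_log hr).continuousAt.continuousWithinAt

theorem intervalIntegrable_one_div_one_add_log {r : ℝ} (hr : exp (-1) < r) :
    IntervalIntegrable (fun s => 1 / (1 + log s)) MeasureTheory.volume 1 r :=
  (continuousOn_one_div_one_add_log.mono
    (ordConnected_Ioi.uIcc_subset exp_neg_one_lt_one hr)).intervalIntegrable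

theorem continuousOn_outerDeriv_four : ContinuousOn (outerDeriv 4) (Ioi (exp (-1))) := by
  intro r hr
  have hr₀ : r ≠ 0 := (exp_pos _ |>.trans hr).ne'
  have hL₀ := (one_add_log_pos hr).ne'
  unfold outerDeriv
  exact ContinuousAt.continuousWithinAt (by fun_prop (disch := assumption))

theorem hasDerivAt_outerDeriv {i : ℕ} (hi : i < 4) {r : ℝ} (hr : exp (-1) < r) :
    HasDerivAt (outerDeriv i) (outerDeriv (i + 1) r) r := by
  have hL := hasDerivAt_inv_one_add_log hr
  have hinv := hasDerivAt_inv (exp_pos _ |>.trans hr).ne'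
  interval_cases i
  · have hint : HasDerivAt (fun u => ∫ s in (1 : ℝ)..u, 1 / (1 + log s)) (1 / (1 + log r)) r :=
      intervalIntegral.integral_hasDerivAt_right (intervalIntegrable_one_div_one_add_log hr)
        (continuousOn_one_div_one_add_log.stronglyMeasurableAtFilter isOpen_Ioi r hr)
        (continuousOn_one_div_one_add_log.continuousAt (isOpen_Ioi.mem_nhds hr))
    refine (((hasDerivAt_id' r).const_mul 3).sub hint |>.add_const _).congr_deriv ?_
    simp [outerDeriv]
  · exact ((hasDerivAt_const r (3 : ℝ)).sub hL).congr_deriv (by simp [outerDeriv])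
  · refine (hinv.fun_mul (hL.fun_pow 2)).congr_deriv ?_
    simp only [outerDeriv, Nat.reduceAdd]
    generalize (1 + log r)⁻¹ = L
    ring
  · refine ((hinv.fun_pow 2).fun_mul
      ((hL.fun_pow 2).fun_add ((hL.fun_pow 3).const_mul 2))).fun_neg.congr_deriv ?_
    simp only [outerDeriv, Nat.reduceAdd]
    generalize (1 + log r)⁻¹ = L
    ring

theorem integral_one_div_one_add_log_nonneg {r : ℝ} (hr : 1 ≤ r) :
    0 ≤ ∫ s in (1 : ℝ)..r, 1 / (1 + log s) :=
  intervalIntegral.integral_nonneg hr fun s hs => by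
    have := log_nonneg hs.1
    positivity

theorem integral_one_div_one_add_log_le {r : ℝ} (hr : 1 ≤ r) :
    ∫ s in (1 : ℝ)..r, 1 / (1 + log s) ≤ r - 1 := by
  calc ∫ s in (1 : ℝ)..r, 1 / (1 + log s) ≤ ∫ _ in (1 : ℝ)..r, (1 : ℝ) :=
        intervalIntegral.integral_mono_on hr
          (intervalIntegrable_one_div_one_add_log (exp_neg_one_lt_one.trans_le hr))
          intervalIntegrable_const fun s hs =>
            div_le_one_of_le₀ (by linarith [log_nonneg hs.1]) (by linarith [log_nonneg hs.1])
    _ = r - 1 := by simp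

theorem outerDeriv_zero_pos {r : ℝ} (hr : 1 ≤ r) : 0 < outerDeriv 0 r := by
  have := integral_one_div_one_add_log_le hr
  simp only [outerDeriv]
  linarith

theorem outerDeriv_zero_le {r : ℝ} (hr : 1 ≤ r) : outerDeriv 0 r ≤ 3 * r := by
  have := integral_one_div_one_add_log_nonneg hr
  simp only [outerDeriv]
  linarith

theorem outerDeriv_one_pos {r : ℝ} (hr : 1 ≤ r) : 0 < outerDeriv 1 r := by
  have : (1 + log r)⁻¹ ≤ 1 := inv_le_one_of_one_le₀ (by linarith [log_nonneg hr])
  simp only [outerDeriv]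
  linarith

theorem outerDeriv_two_pos {r : ℝ} (hr : exp (-1) < r) : 0 < outerDeriv 2 r := by
  have := one_add_log_pos hr
  have := exp_pos (-1) |>.trans hr
  simp only [outerDeriv]
  positivity

noncomputable def profileDeriv (i : ℕ) (r : ℝ) : ℝ :=
  if r ≤ 1 then (derivative^[i] innerPoly).eval r else outerDeriv i r

theorem hasDerivAt_profileDeriv {i : ℕ} (hi : i < 4) {r : ℝ} (hr : exp (-1) < r) :
    HasDerivAt (profileDeriv i) (profileDeriv (i + 1) r) r := by
  have hpoly := (derivative^[i] innerPoly).hasDerivAt r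
  rw [← Function.iterate_succ_apply' derivative] at hpoly
  exact hpoly.ite_le (A' := fun r => (derivative^[i + 1] innerPoly).eval r)
    (hasDerivAt_outerDeriv hi hr) (eval_iterate_derivative_innerPoly_one hi.le)
    (eval_iterate_derivative_innerPoly_one hi)

theorem profileDeriv_of_one_le {i : ℕ} (hi : i ≤ 4) {r : ℝ} (hr : 1 ≤ r) :
    profileDeriv i r = outerDeriv i r := by
  rcases hr.eq_or_lt with rfl | hr
  · simp [profileDeriv, eval_iterate_derivative_innerPoly_one hi]
  · exact if_neg hr.not_ge

theorem profileDeriv_zero_of_le_one {r : ℝ} (hr : r ≤ 1) :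
    profileDeriv 0 r = innerPolySq.eval (r ^ 2) := by
  simp [profileDeriv, hr, eval_innerPoly]

theorem contDiffOn_profileDeriv_zero : ContDiffOn ℝ 4 (profileDeriv 0) (Ioi (exp (-1))) := by
  exact_mod_cast contDiffOn_of_hasDerivAt_succ isOpen_Ioi 4 profileDeriv
    (fun i hi r hr => hasDerivAt_profileDeriv hi hr)
    ((Polynomial.continuousOn _).ite_le continuousOn_outerDeriv_four
      (eval_iterate_derivative_innerPoly_one le_rfl))

theorem profileDeriv_zero_pos {r : ℝ} (hr : 0 < r) : 0 < profileDeriv 0 r := by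
  rcases le_or_gt r 1 with h | h
  · rw [profileDeriv_zero_of_le_one h]
    exact innerPolySq_pos (by positivity) (pow_le_one₀ hr.le h)
  · rw [profileDeriv_of_one_le (by norm_num) h.le]
    exact outerDeriv_zero_pos h.le

theorem profileDeriv_zero_le {r : ℝ} (hr : 0 ≤ r) : profileDeriv 0 r ≤ 3 * r := by
  rcases le_or_gt r 1 with h | h
  · rw [profileDeriv_zero_of_le_one h]
    have := innerPolySq_le (sq_nonneg r) (pow_le_one₀ hr h)
    nlinarith
  · rw [profileDeriv_of_one_le (by norm_num) h.le]
    exact outerDeriv_zero_le h.le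

section RadialProfile

variable {E : Type*} [NormedAddCommGroup E] [InnerProductSpace ℝ E]

theorem contDiff_profileDeriv_zero_comp_norm :
    ContDiff ℝ 4 (fun x : E => profileDeriv 0 ‖x‖) :=
  contDiff_comp_norm (exp_pos _).le exp_neg_one_lt_one
    (by simpa using innerPolySq.contDiff_aeval (𝕜 := ℝ) 4)
    (fun _ _ hr => profileDeriv_zero_of_le_one hr.le) contDiffOn_profileDeriv_zero

theorem inner_fderiv_gradient_profileDeriv_zero_pos [CompleteSpace E] {x v : E} (hv : v ≠ 0) :
    0 < ⟪fderiv ℝ (gradient fun y => profileDeriv 0 ‖y‖) x v, v⟫ := by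
  rcases lt_or_ge ‖x‖ 1 with hx | hx
  · have ht : ‖x‖ ^ 2 ≤ 1 := pow_le_one₀ (norm_nonneg x) hx.le
    exact inner_fderiv_gradient_pos Metric.isOpen_ball (mem_ball_zero_iff.mpr hx)
      (fun y hy => profileDeriv_zero_of_le_one (mem_ball_zero_iff.mp hy).le)
      (fun y _ => innerPolySq.hasDerivAt _) ((derivative innerPolySq).hasDerivAt _)
      (derivative_innerPolySq_pos (sq_nonneg _) ht)
      (derivative_innerPolySq_add_pos (sq_nonneg _) ht) hv
  · have hx₁ : exp (-1) < ‖x‖ := exp_neg_one_lt_one.trans_le hx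
    exact inner_fderiv_gradient_pos_of_comp_norm (U := {y | exp (-1) < ‖y‖})
      (isOpen_lt continuous_const continuous_norm) (by simpa using (exp_pos _).le) hx₁
      (fun _ _ => rfl) (fun y hy => hasDerivAt_profileDeriv (by norm_num) hy)
      (hasDerivAt_profileDeriv (by norm_num) hx₁)
      (profileDeriv_of_one_le (i := 1) (by norm_num) hx ▸ outerDeriv_one_pos hx)
      (profileDeriv_of_one_le (i := 2) (by norm_num) hx ▸ outerDeriv_two_pos hx₁) hv

end RadialProfile

/-- There exist constants `a₁,…,a₅` such that the radial function
`φ(r) = a₁r² + a₂r⁴ + a₃r⁶ + a₄r⁸` on `[0,1]` and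
`φ(r) = 3r - ∫₁^r ds/(1+log s) + a₅` for `r > 1` defines a `C⁴` function `x ↦ φ(|x|)`
on `ℝⁿ`, strictly convex (positive definite Hessian everywhere, hence on every compact
set), with `φ(0) = 0`, `φ(r) > 0` for `r > 0` and `φ(r) ≤ Mr` for some `M > 0`. -/
theorem stmt11 (n : ℕ) :
    ∃ a₁ a₂ a₃ a₄ a₅ : ℝ, ∃ M : ℝ, 0 < M ∧
      ∀ g : ℝ → ℝ,
        (∀ r : ℝ, 0 ≤ r → r ≤ 1 → g r = a₁ * r ^ 2 + a₂ * r ^ 4 + a₃ * r ^ 6 + a₄ * r ^ 8) →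
        (∀ r : ℝ, 1 < r →
          g r = 3 * r - (∫ s in (1:ℝ)..r, 1 / (1 + Real.log s)) + a₅) →
        (ContDiff ℝ 4 (fun x : EuclideanSpace ℝ (Fin n) => g ‖x‖)
          ∧ g 0 = 0
          ∧ (∀ r : ℝ, 0 < r → 0 < g r)
          ∧ (∀ r : ℝ, 0 ≤ r → g r ≤ M * r)
          ∧ ∀ x v : EuclideanSpace ℝ (Fin n), v ≠ 0 →
              0 < ⟪fderiv ℝ (gradient (fun y : EuclideanSpace ℝ (Fin n) => g ‖y‖)) x v, v⟫) := by
  refine ⟨103 / 96, 9 / 64, -17 / 96, 17 / 384, -737 / 384, 3, three_pos, fun g hin hout => ?_⟩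
  have hg : ∀ r, 0 ≤ r → g r = profileDeriv 0 r := by
    intro r hr₀
    rcases le_or_gt r 1 with hr | hr
    · rw [hin r hr₀ hr, profileDeriv_zero_of_le_one hr]
      simp only [innerPolySq, eval_add, eval_mul, eval_C, eval_X, eval_pow]
      ring
    · rw [hout r hr, profileDeriv_of_one_le (by norm_num) hr.le]
      rfl
  have hgn : (fun x : EuclideanSpace ℝ (Fin n) => g ‖x‖) = fun x => profileDeriv 0 ‖x‖ :=
    funext fun x => hg _ (norm_nonneg x)
  rw [hgn, hg 0 le_rfl, profileDeriv_zero_of_le_one zero_le_one]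
  exact ⟨contDiff_profileDeriv_zero_comp_norm, by simp [innerPolySq],
    fun r hr => hg r hr.le ▸ profileDeriv_zero_pos hr,
    fun r hr => hg r hr ▸ profileDeriv_zero_le hr,
    fun x v hv => inner_fderiv_gradient_profileDeriv_zero_pos hv⟩
end
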